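/- Consider a commutative diagram of abelian groups with exact rows 0 → A₁ → B₁ → C₁ → D₁ and 0 → A₂ → B₂ → C₂ → D₂, and vertical maps α : A₁ → A₂ surjective, β : B₁ → B₂, γ : C₁ → C₂, δ : D₁ → D₂ an isomorphism. If furthermore there is a homomorphism ε : S → B₂ such that the composite S → B₂ → coker γ (via C₂) is an isomorphism, then the map B₁ ⊕ S → B₂ given by (β, ε) is surjective. -/

import Mathlib

/-! The cokernel of `γ` is hit by `S`, so every `b₂` can be corrected by some `ε s` until
`p₂ b₂` lies in the range of `γ`. A four-lemma chase through `δ` (injective) and exactness at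
`C₁` lifts that element of `range γ ∩ range p₂` to `p₂ (β b₁)`; what remains is killed by `p₂`,
hence comes from `A₂ = α(A₁)` and so lies in the range of `β`. -/

namespace AddMonoidHom

variable {A₁ B₁ C₁ D₁ A₂ B₂ C₂ D₂ : Type*}
  [AddCommGroup A₁] [AddCommGroup B₁] [AddCommGroup C₁] [AddCommGroup D₁]
  [AddCommGroup A₂] [AddCommGroup B₂] [AddCommGroup C₂] [AddCommGroup D₂]

theorem range_inf_range_le_range_comp {p₁ : B₁ →+ C₁} {q₁ : C₁ →+ D₁}
    {p₂ : B₂ →+ C₂} {q₂ : C₂ →+ D₂} {β : B₁ →+ B₂} {γ : C₁ →+ C₂} {δ : D₁ →+ D₂}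
    (hex₁ : Function.Exact p₁ q₁) (hq₂p₂ : q₂.comp p₂ = 0)
    (hcomm₁ : p₂.comp β = γ.comp p₁) (hcomm₂ : q₂.comp γ = δ.comp q₁)
    (hδ : Function.Injective δ) :
    γ.range ⊓ p₂.range ≤ (p₂.comp β).range := by
  rintro _ ⟨⟨c₁, rfl⟩, b₂, hb₂⟩
  have hq₁ : q₁ c₁ = 0 := hδ <| by
    rw [map_zero, ← comp_apply, ← hcomm₂, comp_apply, ← hb₂, ← comp_apply, hq₂p₂, zero_apply]
  obtain ⟨b₁, rfl⟩ := (hex₁ c₁).mp hq₁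
  exact ⟨b₁, by rw [hcomm₁, comp_apply]⟩

theorem ker_le_range_of_surjective {i₁ : A₁ →+ B₁} {i₂ : A₂ →+ B₂} {p₂ : B₂ →+ C₂}
    {α : A₁ →+ A₂} {β : B₁ →+ B₂} (hex₂ : Function.Exact i₂ p₂)
    (hcomm : i₂.comp α = β.comp i₁) (hα : Function.Surjective α) :
    p₂.ker ≤ β.range := by
  intro b₂ hb₂
  obtain ⟨a₂, rfl⟩ := (hex₂ b₂).mp hb₂
  obtain ⟨a₁, rfl⟩ := hα a₂
  exact ⟨i₁ a₁, by rw [← comp_apply, ← hcomm, comp_apply]⟩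

end AddMonoidHom

open AddMonoidHom in
theorem coprod_surjective_of_diagram_general
    {A₁ B₁ C₁ D₁ A₂ B₂ C₂ D₂ S : Type*}
    [AddCommGroup A₁] [AddCommGroup B₁] [AddCommGroup C₁] [AddCommGroup D₁]
    [AddCommGroup A₂] [AddCommGroup B₂] [AddCommGroup C₂] [AddCommGroup D₂]
    [AddCommGroup S]
    (i₁ : A₁ →+ B₁) (p₁ : B₁ →+ C₁) (q₁ : C₁ →+ D₁)
    (i₂ : A₂ →+ B₂) (p₂ : B₂ →+ C₂) (q₂ : C₂ →+ D₂)
    (hex₁' : Function.Exact p₁ q₁)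
    (hex₂ : Function.Exact i₂ p₂)
    (hex₂' : Function.Exact p₂ q₂)
    (α : A₁ →+ A₂) (β : B₁ →+ B₂) (γ : C₁ →+ C₂) (δ : D₁ →+ D₂)
    (hcomm1 : i₂.comp α = β.comp i₁) (hcomm2 : p₂.comp β = γ.comp p₁)
    (hcomm3 : q₂.comp γ = δ.comp q₁)
    (hα : Function.Surjective α) (hδ : Function.Bijective δ)
    (ε : S →+ B₂)
    (hε : Function.Bijective
      (((QuotientAddGroup.mk' γ.range).comp p₂).comp ε)) :
    Function.Surjective (β.coprod ε) := by
  intro b₂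
  obtain ⟨s, hs⟩ := hε.2 (QuotientAddGroup.mk' γ.range (p₂ b₂))
  have hγ : p₂ (b₂ - ε s) ∈ γ.range := by
    rw [map_sub, ← neg_sub, neg_mem_iff, ← QuotientAddGroup.eq_iff_sub_mem]
    simpa using hs
  obtain ⟨b₁, hb₁⟩ := range_inf_range_le_range_comp hex₁' (ext hex₂'.apply_apply_eq_zero)
    hcomm2 hcomm3 hδ.1 ⟨hγ, _, rfl⟩
  have hker : b₂ - ε s - β b₁ ∈ p₂.ker := by
    rw [mem_ker, map_sub, ← hb₁, comp_apply, sub_self]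
  obtain ⟨b₁', hb₁'⟩ := ker_le_range_of_surjective hex₂ hcomm1 hα hker
  exact ⟨(b₁ + b₁', s), by rw [coprod_apply, map_add, hb₁']; abel⟩

/-- Abstract form of the final argument of Lemma 3.5: given a commutative
diagram of abelian groups with exact rows `0 → A₁ → B₁ → C₁ → D₁` and
`0 → A₂ → B₂ → C₂ → D₂`, `α` surjective, `δ` an isomorphism, and a homomorphism
`ε : S →+ B₂` such that the composite `S → B₂ → C₂ → coker γ` is an
isomorphism, the map `(β, ε) : B₁ ⊕ S → B₂` is surjective. -/
theorem coprod_surjective_of_diagram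
    {A₁ B₁ C₁ D₁ A₂ B₂ C₂ D₂ S : Type*}
    [AddCommGroup A₁] [AddCommGroup B₁] [AddCommGroup C₁] [AddCommGroup D₁]
    [AddCommGroup A₂] [AddCommGroup B₂] [AddCommGroup C₂] [AddCommGroup D₂]
    [AddCommGroup S]
    (i₁ : A₁ →+ B₁) (p₁ : B₁ →+ C₁) (q₁ : C₁ →+ D₁)
    (i₂ : A₂ →+ B₂) (p₂ : B₂ →+ C₂) (q₂ : C₂ →+ D₂)
    (hi₁ : Function.Injective i₁) (hex₁ : Function.Exact i₁ p₁)
    (hex₁' : Function.Exact p₁ q₁)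
    (hi₂ : Function.Injective i₂) (hex₂ : Function.Exact i₂ p₂)
    (hex₂' : Function.Exact p₂ q₂)
    (α : A₁ →+ A₂) (β : B₁ →+ B₂) (γ : C₁ →+ C₂) (δ : D₁ →+ D₂)
    (hcomm1 : i₂.comp α = β.comp i₁) (hcomm2 : p₂.comp β = γ.comp p₁)
    (hcomm3 : q₂.comp γ = δ.comp q₁)
    (hα : Function.Surjective α) (hδ : Function.Bijective δ)
    (ε : S →+ B₂)
    (hε : Function.Bijective
      (((QuotientAddGroup.mk' γ.range).comp p₂).comp ε)) :
    Function.Surjective (β.coprod ε) :=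
  coprod_surjective_of_diagram_general i₁ p₁ q₁ i₂ p₂ q₂ hex₁' hex₂ hex₂' α β γ δ hcomm1 hcomm2
    hcomm3 hα hδ ε hε
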